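/- The function ψ(x,y) = (1/κ)·ln( κx/y + √(1 + κ²x²/y²) ) solves the eikonal equation ψ_x² + κ² ψ_y² = 1/y² for all x ∈ ℝ and y > 0, together with ψ(0,y) = 0 and ψ(x,y) > 0 for x > 0. -/

import Mathlib

noncomputable def psiHW (κ x y : ℝ) : ℝ :=
  (1 / κ) * Real.log (κ * x / y + Real.sqrt (1 + κ ^ 2 * x ^ 2 / y ^ 2))

/-!
Since `ψ = κ⁻¹ arsinh(κx/y)` and `arsinh' u = (1 + u²)^(-1/2)`, with `u = κx/y` one gets
`ψ_x = 1 / (y √(1 + u²))` and `ψ_y = -x / (y² √(1 + u²))`, so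
`ψ_x² + κ² ψ_y² = (1 + u²) / (y² (1 + u²)) = 1 / y²`.
The boundary value and the sign follow from `arsinh 0 = 0` and the monotonicity of `arsinh`.
-/

open Real

namespace psiHW

variable {κ : ℝ}

theorem eq_arsinh (κ x y : ℝ) : psiHW κ x y = κ⁻¹ * arsinh (κ * x / y) := by
  rw [psiHW, arsinh, one_div, div_pow, mul_pow]

theorem hasDerivAt_fst (hκ : κ ≠ 0) (x y : ℝ) :
    HasDerivAt (fun x' => psiHW κ x' y) (1 / (y * √(1 + (κ * x / y) ^ 2))) x := by
  have hu : HasDerivAt (fun x' => κ * x' / y) (κ / y) x := by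
    simpa using ((hasDerivAt_id x).const_mul κ).div_const y
  have h : HasDerivAt (fun x' => κ⁻¹ * arsinh (κ * x' / y))
      (κ⁻¹ * ((√(1 + (κ * x / y) ^ 2))⁻¹ * (κ / y))) x :=
    ((hasDerivAt_arsinh _).comp x hu).const_mul κ⁻¹
  convert h using 1
  · exact funext fun x' => eq_arsinh κ x' y
  · field_simp

theorem hasDerivAt_snd (hκ : κ ≠ 0) (x : ℝ) {y : ℝ} (hy : y ≠ 0) :
    HasDerivAt (fun y' => psiHW κ x y') (-(x / (y ^ 2 * √(1 + (κ * x / y) ^ 2)))) y := by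
  have hu : HasDerivAt (fun y' => κ * x / y') (-(κ * x) / y ^ 2) y := by
    simpa [div_eq_mul_inv] using (hasDerivAt_inv hy).const_mul (κ * x)
  have h : HasDerivAt (fun y' => κ⁻¹ * arsinh (κ * x / y'))
      (κ⁻¹ * ((√(1 + (κ * x / y) ^ 2))⁻¹ * (-(κ * x) / y ^ 2))) y :=
    ((hasDerivAt_arsinh _).comp y hu).const_mul κ⁻¹
  convert h using 1
  · exact funext fun y' => eq_arsinh κ x y'
  · field_simp

theorem eikonal (hκ : κ ≠ 0) (x : ℝ) {y : ℝ} (hy : y ≠ 0) :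
    deriv (fun x' => psiHW κ x' y) x ^ 2 + κ ^ 2 * deriv (fun y' => psiHW κ x y') y ^ 2
      = 1 / y ^ 2 := by
  rw [(hasDerivAt_fst hκ x y).deriv, (hasDerivAt_snd hκ x hy).deriv]
  have hs₀ : √(1 + (κ * x / y) ^ 2) ≠ 0 := (sqrt_pos.2 (by positivity)).ne'
  have hs : √(1 + (κ * x / y) ^ 2) ^ 2 = 1 + (κ * x / y) ^ 2 := sq_sqrt (by positivity)
  generalize √(1 + (κ * x / y) ^ 2) = s at hs hs₀ ⊢
  field_simp
  rw [hs]
  field_simp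

theorem zero_left (κ y : ℝ) : psiHW κ 0 y = 0 := by
  simp [eq_arsinh]

theorem pos (hκ : 0 < κ) {x y : ℝ} (hx : 0 < x) (hy : 0 < y) : 0 < psiHW κ x y := by
  rw [eq_arsinh]
  exact mul_pos (inv_pos.2 hκ) (arsinh_pos_iff.2 (by positivity))

end psiHW

/-- `ψ(x,y) = (1/κ) ln(κx/y + √(1 + κ²x²/y²))` solves the eikonal equation
`ψ_x² + κ² ψ_y² = 1/y²`, with `ψ(0,y) = 0` and `ψ(x,y) > 0` for `x > 0`. -/
theorem psi_solves_eikonal (κ : ℝ) (hκ : 0 < κ) :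
    (∀ x y : ℝ, 0 < y →
      (deriv (fun x' => psiHW κ x' y) x) ^ 2
        + κ ^ 2 * (deriv (fun y' => psiHW κ x y') y) ^ 2 = 1 / y ^ 2) ∧
    (∀ y : ℝ, 0 < y → psiHW κ 0 y = 0) ∧
    (∀ x y : ℝ, 0 < y → 0 < x → 0 < psiHW κ x y) :=
  ⟨fun x _ hy => psiHW.eikonal hκ.ne' x hy.ne',
    fun y _ => psiHW.zero_left κ y,
    fun _ _ hy hx => psiHW.pos hκ hx hy⟩
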